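/- Let β∖γ be a rook strip. All saturated chains between two fixed comparable elements in the poset of LR-fillings of type (α, β, γ) under ≤_box have the same length; specifically, the length of any saturated chain from Z up to X equals ℓ(π(Z)) − ℓ(π(X)), the difference of Coxeter lengths of the associated permutations. -/

import Mathlib

open Equiv

/-! ### Permutations: adjacent transpositions, Coxeter length, Bruhat order -/

/-- `s` is an adjacent transposition `(i, i+1)` in `S_n` (values `0`-indexed). -/
def IsAdjTrans {n : ℕ} (s : Perm (Fin n)) : Prop :=
  ∃ (i : ℕ) (h : i + 1 < n), s = Equiv.swap ⟨i, Nat.lt_of_succ_lt h⟩ ⟨i + 1, h⟩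

/-- Coxeter length: the minimal number of adjacent transpositions in a factorization. -/
noncomputable def permLength {n : ℕ} (x : Perm (Fin n)) : ℕ :=
  sInf {k | ∃ l : List (Perm (Fin n)), l.length = k ∧ (∀ s ∈ l, IsAdjTrans s) ∧ l.prod = x}

/-- Strict Bruhat order: generated by `u < t * u` for transpositions `t`
increasing the length. -/
def BruhatLT {n : ℕ} (x z : Perm (Fin n)) : Prop :=
  Relation.TransGen
    (fun u v => ∃ t : Perm (Fin n), t.IsSwap ∧ v = t * u ∧ permLength u < permLength v) x z

/-- Bruhat order (reflexive version). -/
def BruhatLE {n : ℕ} (x z : Perm (Fin n)) : Prop := x = z ∨ BruhatLT x z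

/-! ### Partitions -/

/-- A partition: an antitone, finitely supported function `ℕ → ℕ`
(the part `αᵢ` of the paper is `f (i-1)`; rows are `0`-indexed). -/
structure Partn where
  f : ℕ → ℕ
  antitone' : Antitone f
  finite_supp : ∃ N, ∀ i, N ≤ i → f i = 0

/-- `p` is a partition of `n`. -/
def PartnOf (p : Partn) (n : ℕ) : Prop :=
  ∃ N, (∀ i, N ≤ i → p.f i = 0) ∧ ∑ i ∈ Finset.range N, p.f i = n

/-- The partial sum `α₁ + ⋯ + α_j` of the first `j` parts. -/
def psum (p : Partn) (j : ℕ) : ℕ := ∑ i ∈ Finset.range j, p.f i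

/-- The set of block boundaries `α₁, α₁+α₂, …` (`1`-indexed positions). -/
def Bdry (p : Partn) : Set ℕ := {m | ∃ j, 1 ≤ j ∧ m = psum p j}

/-- `S^α`: permutations whose values within each block of `α` occur in increasing
order of position.  Values are `0`-indexed: value `v` is the paper's value `v+1`,
and `v`, `v+1` lie in the same block iff `v+1 ∉ Bdry α`. -/
def SAset (α : Partn) {n : ℕ} (x : Perm (Fin n)) : Prop :=
  ∀ (v : ℕ) (h : v + 1 < n), (v + 1) ∉ Bdry α →
    x⁻¹ ⟨v, Nat.lt_of_succ_lt h⟩ < x⁻¹ ⟨v + 1, h⟩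

/-- Containment of partitions. -/
def PartnSub (γ β : Partn) : Prop := ∀ i, γ.f i ≤ β.f i

/-- The transpose (conjugate) partition: `β'_j = #{i : βᵢ ≥ j}` (columns `0`-indexed). -/
noncomputable def ptranspose (p : Partn) (j : ℕ) : ℕ := Set.ncard {i | j < p.f i}

/-- `β∖γ` is a vertical strip: `βᵢ ≤ γᵢ + 1` for all `i`. -/
def VertStrip (β γ : Partn) : Prop := ∀ i, β.f i ≤ γ.f i + 1

/-- `β∖γ` is a horizontal strip: `β'∖γ'` is a vertical strip. -/
def HorizStrip (β γ : Partn) : Prop := ∀ j, ptranspose β j ≤ ptranspose γ j + 1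

/-- A rook strip is a horizontal and vertical strip. -/
def RookStrip (β γ : Partn) : Prop := VertStrip β γ ∧ HorizStrip β γ

/-- The boxes of the skew diagram `β∖γ` (row, column), `0`-indexed. -/
def SkewCells (β γ : Partn) : Set (ℕ × ℕ) := {c | γ.f c.1 ≤ c.2 ∧ c.2 < β.f c.1}

/-! ### Fillings of skew diagrams -/

/-- A filling of the skew diagram `β∖γ` with content `α`: each box gets an entry
`≥ 1`, and there are `α_u` entries equal to `u` (the paper's `αᵤ` is `α.f (u-1)`). -/
structure SkFilling (α β γ : Partn) where
  entry : ℕ × ℕ → ℕ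
  zero_outside : ∀ c, c ∉ SkewCells β γ → entry c = 0
  pos_inside : ∀ c ∈ SkewCells β γ, 1 ≤ entry c
  content : ∀ u : ℕ, 1 ≤ u → Set.ncard {c ∈ SkewCells β γ | entry c = u} = α.f (u - 1)

/-- The Littlewood–Richardson conditions: rows weakly increase, columns strictly
increase, and the lattice permutation property holds. -/
def IsLRF {α β γ : Partn} (F : SkFilling α β γ) : Prop :=
  (∀ i j j' : ℕ, (i, j) ∈ SkewCells β γ → (i, j') ∈ SkewCells β γ → j ≤ j' →
      F.entry (i, j) ≤ F.entry (i, j')) ∧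
  (∀ i i' j : ℕ, (i, j) ∈ SkewCells β γ → (i', j) ∈ SkewCells β γ → i < i' →
      F.entry (i, j) < F.entry (i', j)) ∧
  (∀ u c : ℕ, 2 ≤ u →
      Set.ncard {p ∈ SkewCells β γ | c ≤ p.2 ∧ F.entry p = u} ≤
      Set.ncard {p ∈ SkewCells β γ | c ≤ p.2 ∧ F.entry p = u - 1})

/-- Row `i` of the partition `γ⁽ᵘ⁾`: the boxes of `γ` together with the boxes of
`β∖γ` whose entry is at most `u`. -/
noncomputable def regionRow {α β γ : Partn} (F : SkFilling α β γ) (u i : ℕ) : ℕ :=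
  γ.f i + Set.ncard {j | (i, j) ∈ SkewCells β γ ∧ F.entry (i, j) ≤ u}

/-- Dominance order on fillings: `Z ≤_dom X` iff `δ⁽ᵘ⁾ ≤_dom γ⁽ᵘ⁾` for every `u`. -/
def DomLE {α β γ : Partn} (Z X : SkFilling α β γ) : Prop :=
  ∀ u j : ℕ, ∑ i ∈ Finset.range j, regionRow Z u i ≤ ∑ i ∈ Finset.range j, regionRow X u i

/-- A single sorting swap: exchange two out-of-order entries within a row
(left entry bigger) or within a column (upper entry bigger). -/
def SortSwap (β γ : Partn) (W Z : ℕ × ℕ → ℕ) : Prop :=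
  ∃ p q : ℕ × ℕ, p ∈ SkewCells β γ ∧ q ∈ SkewCells β γ ∧
    ((p.1 = q.1 ∧ p.2 < q.2) ∨ (p.2 = q.2 ∧ p.1 < q.1)) ∧
    W q < W p ∧
    Z = Function.update (Function.update W p (W q)) q (W p)

/-- `Z` is obtained from `X` by a decreasing box move: two entries of `X` are
exchanged so that the smaller entry is in the lower position after the exchange,
and then rows and columns are re-sorted if necessary. -/
def BoxMove {α β γ : Partn} (X Z : SkFilling α β γ) : Prop :=
  ∃ p q : ℕ × ℕ, p ∈ SkewCells β γ ∧ q ∈ SkewCells β γ ∧ p.1 < q.1 ∧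
    X.entry p < X.entry q ∧
    Relation.ReflTransGen (SortSwap β γ)
      (Function.update (Function.update X.entry p (X.entry q)) q (X.entry p)) Z.entry

/-- The box order on LR-fillings: generated by decreasing box moves. -/
def LeBox {α β γ : Partn} (Z X : SkFilling α β γ) : Prop :=
  Relation.ReflTransGen (fun Y W => IsLRF Y ∧ IsLRF W ∧ BoxMove W Y) Z X

/-! ### Reading words and standardization -/

/-- The block (paper entry, `1`-indexed) containing the `0`-indexed value `v`. -/
noncomputable def blockIdx (α : Partn) (v : ℕ) : ℕ := sInf {u | v < psum α u}

/-- `e` enumerates the boxes of the rook strip `β∖γ` from top right to bottom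
left, i.e. in increasing order of rows. -/
def IsRowRead (β γ : Partn) {n : ℕ} (e : Fin n → ℕ × ℕ) : Prop :=
  (∀ k, e k ∈ SkewCells β γ) ∧ Function.Injective e ∧
  (∀ c ∈ SkewCells β γ, ∃ k, e k = c) ∧
  ∀ k l : Fin n, k < l → (e k).1 < (e l).1

/-- `e` enumerates the boxes of `β∖γ` column by column from left to right, each
column read from bottom to top (the reading order of the word `ω`). -/
def IsColRead (β γ : Partn) {n : ℕ} (e : Fin n → ℕ × ℕ) : Prop :=
  (∀ k, e k ∈ SkewCells β γ) ∧ Function.Injective e ∧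
  (∀ c ∈ SkewCells β γ, ∃ k, e k = c) ∧
  ∀ k l : Fin n, k < l →
    (e k).2 < (e l).2 ∨ ((e k).2 = (e l).2 ∧ (e l).1 < (e k).1)

/-- `p` is the standardization `π(F)` of the reading word of the filling `F`
with respect to the reading enumeration `e`: position `k` receives a value in the
block corresponding to the entry of the `k`-th box, and equal entries receive
their values in reading order. -/
def IsStdOf (α : Partn) {β γ : Partn} {n : ℕ} (F : SkFilling α β γ)
    (e : Fin n → ℕ × ℕ) (p : Perm (Fin n)) : Prop :=
  (∀ k : Fin n, blockIdx α (p k) = F.entry (e k)) ∧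
  ∀ k l : Fin n, k < l → F.entry (e k) = F.entry (e l) → p k < p l

/-- The `α`-recording tableau of `x` is standard: the entries `x⁻¹(psum α u + j)`
increase along rows and down columns of the shape `α` (rows `0`-indexed). -/
def RecStd (α : Partn) {n : ℕ} (x : Perm (Fin n)) : Prop :=
  (∀ u j j' : ℕ, j < j' → j' < α.f u →
    ∀ (h : psum α u + j < n) (h' : psum α u + j' < n),
      x⁻¹ ⟨psum α u + j, h⟩ < x⁻¹ ⟨psum α u + j', h'⟩) ∧
  (∀ u u' j : ℕ, u < u' → j < α.f u' →
    ∀ (h : psum α u + j < n) (h' : psum α u' + j < n),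
      x⁻¹ ⟨psum α u + j, h⟩ < x⁻¹ ⟨psum α u' + j, h'⟩)

/-- Covering relation of the box order on LR-fillings. -/
def CovBox {α β γ : Partn} (X Y : SkFilling α β γ) : Prop :=
  IsLRF X ∧ IsLRF Y ∧ LeBox X Y ∧ X ≠ Y ∧
    ∀ W, IsLRF W → LeBox X W → LeBox W Y → W = X ∨ W = Y

/-- The decreasing block `(i, i-1, …, 1)`. -/
def descBlock (i : ℕ) : List ℕ := ((List.range i).reverse).map (· + 1)

/-!
In a rook strip every row and every column contains a single box, so a filling is determined
by its reading word `w`, the Littlewood–Richardson conditions reduce to the lattice condition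
on the prefixes of `w`, and a decreasing box move just exchanges two letters `w k < w l` at
positions `k < l`. If the exchange is a cover in `≤_box`, no letter `v` with `w k ≤ v ≤ w l`
occurs strictly between the two positions: otherwise an explicit exchange involving that letter
would give a lattice word strictly in between. Such a clean exchange creates exactly one
inversion of `w`, and the number of inversions of `w` is the Coxeter length of `π`, so the
lengths drop by one along each cover of the chain.
-/

open Finset

section Inversions

variable {n : ℕ} {κ : Type*} [LinearOrder κ]

def inversions (f : Fin n → κ) : Finset (Fin n × Fin n) :=
  {z | z.1 < z.2 ∧ f z.2 < f z.1}

def invCount (f : Fin n → κ) : ℕ := #(inversions f)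

@[simp] lemma mem_inversions {f : Fin n → κ} {z : Fin n × Fin n} :
    z ∈ inversions f ↔ z.1 < z.2 ∧ f z.2 < f z.1 := by
  simp [inversions]

/-- Fixes the pairs with an entry strictly between `k` and `l` and applies `swap k l` to both
entries of the others. When no value of `f` between `k` and `l` lies between `f k` and `f l`,
this matches the inversions of `f ∘ swap k l` other than `(k, l)` with those of `f`. -/
def swapPairs (k l : Fin n) (z : Fin n × Fin n) : Fin n × Fin n :=
  if (k < z.1 ∧ z.1 < l) ∨ (k < z.2 ∧ z.2 < l) then z else (swap k l z.1, swap k l z.2)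

lemma swapPairs_swapPairs {k l : Fin n} (hkl : k < l) (z : Fin n × Fin n) :
    swapPairs k l (swapPairs k l z) = z := by
  obtain ⟨i, j⟩ := z
  simp only [swapPairs, swap_apply_def]
  grind

theorem invCount_comp_swap {f : Fin n → κ} {k l : Fin n} (hkl : k < l) (hf : f k < f l)
    (hmid : ∀ j, k < j → j < l → f j < f k ∨ f l < f j) :
    invCount (f ∘ swap k l) = invCount f + 1 := by
  have hkl_mem : (k, l) ∈ inversions (f ∘ swap k l) := by simp [hkl, hf]
  rw [invCount, ← card_erase_add_one hkl_mem, invCount]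
  congr 1
  refine card_nbij' (swapPairs k l) (swapPairs k l) ?_ ?_ (fun z _ => swapPairs_swapPairs hkl z)
    (fun z _ => swapPairs_swapPairs hkl z) <;>
  · rintro ⟨i, j⟩ hz
    have := hmid i
    have := hmid j
    simp only [coe_erase, Set.mem_sdiff, mem_coe, mem_inversions, Function.comp_apply,
      Set.mem_singleton_iff, swapPairs, swap_apply_def] at hz ⊢
    grind

lemma invCount_eq_zero_iff {f : Fin n → κ} : invCount f = 0 ↔ Monotone f := by
  simp only [invCount, inversions, card_eq_zero, filter_eq_empty_iff, mem_univ, true_implies,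
    not_and, not_lt, Prod.forall, monotone_iff_forall_lt]

end Inversions

section CoxeterLength

variable {n i : ℕ}

def adjSwap (h : i + 1 < n) : Perm (Fin n) := swap ⟨i, Nat.lt_of_succ_lt h⟩ ⟨i + 1, h⟩

lemma adjSwap_mul_adjSwap_mul (h : i + 1 < n) (p : Perm (Fin n)) :
    adjSwap h * (adjSwap h * p) = p :=
  swap_mul_self_mul _ _ _

lemma invCount_adjSwap_mul (h : i + 1 < n) (p : Perm (Fin n))
    (hp : p⁻¹ ⟨i, Nat.lt_of_succ_lt h⟩ < p⁻¹ ⟨i + 1, h⟩) :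
    invCount ⇑(adjSwap h * p) = invCount ⇑p + 1 := by
  set k := p⁻¹ ⟨i, Nat.lt_of_succ_lt h⟩
  set l := p⁻¹ ⟨i + 1, h⟩
  have hpk : p k = ⟨i, Nat.lt_of_succ_lt h⟩ := p.apply_symm_apply _
  have hpl : p l = ⟨i + 1, h⟩ := p.apply_symm_apply _
  have hmul : adjSwap h * p = p * swap k l := by
    rw [adjSwap, ← hpk, ← hpl, swap_apply_apply, inv_mul_cancel_right]
  rw [hmul, Perm.coe_mul]
  refine invCount_comp_swap hp (by simp [hpk, hpl, Fin.lt_def]) fun j hkj hjl => ?_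
  have hjk : p j ≠ p k := p.injective.ne hkj.ne'
  have hjl' : p j ≠ p l := p.injective.ne hjl.ne
  simp only [hpk, hpl, ne_eq, Fin.ext_iff, Fin.lt_def] at hjk hjl' ⊢
  omega

lemma invCount_adjSwap_mul_le (h : i + 1 < n) (p : Perm (Fin n)) :
    invCount ⇑(adjSwap h * p) ≤ invCount ⇑p + 1 := by
  rcases lt_or_gt_of_ne (p⁻¹.injective.ne (a₁ := ⟨i, Nat.lt_of_succ_lt h⟩) (a₂ := ⟨i + 1, h⟩)
    (by simp [Fin.ext_iff])) with hp | hp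
  · exact (invCount_adjSwap_mul h p hp).le
  · have := invCount_adjSwap_mul h (adjSwap h * p) (by simpa [adjSwap, mul_inv_rev] using hp)
    rw [adjSwap_mul_adjSwap_mul] at this
    omega

lemma invCount_list_prod_le (l : List (Perm (Fin n))) (hl : ∀ s ∈ l, IsAdjTrans s) :
    invCount ⇑l.prod ≤ l.length := by
  induction l with
  | nil => simp [invCount_eq_zero_iff.2 monotone_id]
  | cons s t ih =>
    obtain ⟨i, h, rfl⟩ := hl s List.mem_cons_self
    have := ih fun u hu => hl u (List.mem_cons_of_mem _ hu)
    have := invCount_adjSwap_mul_le h t.prod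
    rw [List.prod_cons, List.length_cons]
    exact this.trans (by omega)

lemma exists_adjDescent {p : Perm (Fin n)} (hp : p ≠ 1) :
    ∃ (i : ℕ) (h : i + 1 < n), p⁻¹ ⟨i + 1, h⟩ < p⁻¹ ⟨i, Nat.lt_of_succ_lt h⟩ := by
  contrapose! hp
  obtain _ | n := n
  · exact Subsingleton.elim _ _
  have hmono : StrictMono ⇑p⁻¹ := Fin.strictMono_iff_lt_succ.2 fun i =>
    (hp i i.succ.isLt).lt_of_ne (p⁻¹.injective.ne (Fin.castSucc_lt_succ).ne)
  exact inv_eq_one.1 (DFunLike.coe_injective hmono.eq_id)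

lemma exists_adjTrans_prod_of_invCount (p : Perm (Fin n)) :
    ∃ l : List (Perm (Fin n)), l.length = invCount ⇑p ∧ (∀ s ∈ l, IsAdjTrans s) ∧ l.prod = p := by
  induction hk : invCount ⇑p generalizing p with
  | zero =>
    refine ⟨[], rfl, by simp, ?_⟩
    have hmono := (invCount_eq_zero_iff.1 hk).strictMono_of_injective p.injective
    exact (DFunLike.coe_injective hmono.eq_id).symm
  | succ k ih =>
    have hp : p ≠ 1 := by rintro rfl; simp [invCount_eq_zero_iff.2 monotone_id] at hk
    obtain ⟨i, h, hi⟩ := exists_adjDescent hp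
    have hs := invCount_adjSwap_mul h (adjSwap h * p) (by simpa [adjSwap, mul_inv_rev] using hi)
    rw [adjSwap_mul_adjSwap_mul] at hs
    obtain ⟨l, hlen, hadj, hprod⟩ := ih (adjSwap h * p) (by omega)
    refine ⟨adjSwap h :: l, by simp [hlen], ?_,
      by rw [List.prod_cons, hprod, adjSwap_mul_adjSwap_mul]⟩
    simp only [List.mem_cons, forall_eq_or_imp]
    exact ⟨⟨i, h, rfl⟩, hadj⟩

theorem permLength_eq_invCount (p : Perm (Fin n)) : permLength p = invCount ⇑p := by
  obtain ⟨l, hlen, hadj, hprod⟩ := exists_adjTrans_prod_of_invCount p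
  refine le_antisymm (Nat.sInf_le ⟨l, hlen, hadj, hprod⟩) (le_csInf ⟨_, l, hlen, hadj, hprod⟩ ?_)
  rintro _ ⟨l', rfl, hadj', rfl⟩
  exact invCount_list_prod_le l' hadj'

end CoxeterLength

section RookStrip

variable {β γ : Partn}

lemma RookStrip.eq_of_fst_eq (hrook : RookStrip β γ) {c c' : ℕ × ℕ} (hc : c ∈ SkewCells β γ)
    (hc' : c' ∈ SkewCells β γ) (h : c.1 = c'.1) : c = c' := by
  obtain ⟨i, j⟩ := c
  obtain ⟨i', j'⟩ := c'
  obtain rfl : i = i' := h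
  have := hrook.1 i
  simp only [SkewCells, Set.mem_ofPred_eq] at hc hc'
  simp only [Prod.mk.injEq, true_and]
  omega

lemma RookStrip.eq_of_snd_eq (hrook : RookStrip β γ) {c c' : ℕ × ℕ} (hc : c ∈ SkewCells β γ)
    (hc' : c' ∈ SkewCells β γ) (h : c.2 = c'.2) : c = c' := by
  obtain ⟨i, j⟩ := c
  obtain ⟨i', j'⟩ := c'
  obtain rfl : j = j' := h
  simp only [SkewCells, Set.mem_ofPred_eq] at hc hc'
  by_contra hne
  replace hne : i ≠ i' := fun h => hne (by rw [h])
  obtain ⟨N, hN⟩ := β.finite_supp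
  have hB : {r | j < β.f r}.Finite :=
    (Set.finite_Iio N).subset fun r hr => Set.mem_Iio.2 <| not_le.1 fun hNr => by
      simp [hN r hNr] at hr
  -- a row of `γ` reaching past column `j` lies above row `i`, so that row of `β` does too
  have hAB : {r | j < γ.f r} ⊆ {r | j < β.f r} := fun r hr =>
    have hri : r < i := not_le.1 fun hir => by have := γ.antitone' hir; simp at hr; omega
    lt_of_lt_of_le hc.2 (β.antitone' hri.le)
  have hA := hB.subset hAB
  have hsub : insert i (insert i' {r | j < γ.f r}) ⊆ {r | j < β.f r} :=
    Set.insert_subset hc.2 (Set.insert_subset hc'.2 hAB)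
  have hcard := Set.ncard_le_ncard hsub hB
  rw [Set.ncard_insert_of_notMem (by simp [hne]; omega) (hA.insert i'),
    Set.ncard_insert_of_notMem (by simp; omega) hA] at hcard
  have := hrook.2 j
  simp only [ptranspose] at this
  omega

variable {n : ℕ} {e : Fin n → ℕ × ℕ}

lemma IsRowRead.lt_iff (he : IsRowRead β γ e) {k l : Fin n} : k < l ↔ (e k).1 < (e l).1 :=
  ⟨he.2.2.2 k l, fun h => lt_of_not_ge fun hlk =>
    hlk.lt_or_eq.elim (fun hlk => (he.2.2.2 l k hlk).not_gt h) (fun hlk => by simp [hlk] at h)⟩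

lemma IsRowRead.snd_strictAnti (hrook : RookStrip β γ) (he : IsRowRead β γ e) :
    StrictAnti fun k => (e k).2 := by
  intro k l hkl
  have hrow := he.lt_iff.1 hkl
  have hk := he.1 k
  have hl := he.1 l
  have hγ := γ.antitone' hrow.le
  have := hrook.1 (e l).1
  simp only [SkewCells, Set.mem_ofPred_eq] at hk hl
  show (e l).2 < (e k).2
  refine lt_of_le_of_ne (by omega) fun h => hrow.ne ?_
  rw [hrook.eq_of_snd_eq hl hk h]

lemma IsRowRead.ncard_cells_filter (he : IsRowRead β γ e) (P : ℕ × ℕ → Prop) [DecidablePred P] :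
    {c | c ∈ SkewCells β γ ∧ P c}.ncard = #{k | P (e k)} := by
  have : {c | c ∈ SkewCells β γ ∧ P c} = e '' ↑({k | P (e k)} : Finset (Fin n)) := by
    ext c
    simp only [Set.mem_ofPred_eq, coe_filter, mem_univ, true_and, Set.mem_image]
    constructor
    · rintro ⟨hc, hP⟩
      obtain ⟨k, rfl⟩ := he.2.2.1 c hc
      exact ⟨k, hP, rfl⟩
    · rintro ⟨k, hP, rfl⟩
      exact ⟨he.1 k, hP⟩
  rw [this, Set.ncard_image_of_injective _ he.2.1, Set.ncard_coe_finset]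

end RookStrip

section LatticeWord

variable {n : ℕ}

def prefixCount (w : Fin n → ℕ) (t u : ℕ) : ℕ := #{i : Fin n | (i : ℕ) < t ∧ w i = u}

def IsLatticeWord (w : Fin n → ℕ) : Prop :=
  ∀ t u, 1 ≤ u → prefixCount w t (u + 1) ≤ prefixCount w t u

variable {w : Fin n → ℕ} {t t' u : ℕ}

lemma prefixCount_mono (w : Fin n → ℕ) (u : ℕ) (h : t ≤ t') :
    prefixCount w t u ≤ prefixCount w t' u :=
  card_le_card <| monotone_filter_right _ fun _ _ hi => ⟨hi.1.trans_le h, hi.2⟩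

lemma prefixCount_add_one_le {j : Fin n} (hj : w j = u) (ht : t ≤ j) :
    prefixCount w t u + 1 ≤ prefixCount w (j + 1) u := by
  have hnot : j ∉ ({i : Fin n | (i : ℕ) < t ∧ w i = u} : Finset (Fin n)) := by simp; omega
  rw [prefixCount, ← card_insert_of_notMem hnot]
  refine card_le_card (insert_subset (by simp [hj]) (monotone_filter_right _ ?_))
  exact fun _ _ hi => ⟨by omega, hi.2⟩

lemma prefixCount_eq_of_forall_ne (h : t ≤ t')
    (hne : ∀ i : Fin n, t ≤ i → (i : ℕ) < t' → w i ≠ u) :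
    prefixCount w t' u = prefixCount w t u := by
  refine congrArg card (filter_congr fun i _ => ⟨fun hi => ⟨?_, hi.2⟩, fun hi => ⟨?_, hi.2⟩⟩)
  · exact lt_of_not_ge fun hti => hne i hti hi.1 hi.2
  · exact hi.1.trans_le h

lemma prefixCount_eq_sum (w : Fin n → ℕ) (t u : ℕ) :
    prefixCount w t u = ∑ i : Fin n, if (i : ℕ) < t ∧ w i = u then 1 else 0 := by
  rw [prefixCount, card_filter]

lemma prefixCount_comp_swap_eq_sum (w : Fin n → ℕ) (k l : Fin n) (t u : ℕ) :
    prefixCount (w ∘ swap k l) t u =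
      ∑ i : Fin n, if (swap k l i : ℕ) < t ∧ w i = u then 1 else 0 := by
  rw [prefixCount_eq_sum, ← Equiv.sum_comp (swap k l)]
  simp [swap_apply_self]

lemma prefixCount_comp_swap_of_iff {k l : Fin n} (h : (k : ℕ) < t ↔ (l : ℕ) < t) :
    prefixCount (w ∘ swap k l) t = prefixCount w t := by
  funext u
  rw [prefixCount_comp_swap_eq_sum, prefixCount_eq_sum]
  refine sum_congr rfl fun i _ => ?_
  have : (swap k l i : ℕ) < t ↔ (i : ℕ) < t := by
    rcases eq_or_ne i k with rfl | hik
    · simp [h]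
    rcases eq_or_ne i l with rfl | hil
    · simp [h]
    rw [swap_apply_of_ne_of_ne hik hil]
  simp only [this]

lemma prefixCount_comp_swap {k l : Fin n} (hk : (k : ℕ) < t) (hl : t ≤ l) (u : ℕ) :
    prefixCount (w ∘ swap k l) t u + (if w k = u then 1 else 0) =
      prefixCount w t u + (if w l = u then 1 else 0) := by
  have hkl : l ≠ k := fun h => by omega
  rw [prefixCount_comp_swap_eq_sum, prefixCount_eq_sum,
    ← add_sum_erase _ _ (mem_univ k), ← add_sum_erase _ _ (mem_erase.2 ⟨hkl, mem_univ l⟩),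
    ← add_sum_erase _ _ (mem_univ k), ← add_sum_erase _ _ (mem_erase.2 ⟨hkl, mem_univ l⟩),
    sum_congr rfl fun i hi => by
      rw [swap_apply_of_ne_of_ne (ne_of_mem_erase (mem_of_mem_erase hi)) (ne_of_mem_erase hi)]]
  simp only [swap_apply_left, swap_apply_right, hk, true_and, not_lt.2 hl, false_and, if_false]
  omega

lemma IsLatticeWord.of_prefixCount {v : Fin n → ℕ}
    (h : ∀ t, ∃ w₀ : Fin n → ℕ, IsLatticeWord w₀ ∧ prefixCount v t = prefixCount w₀ t) :
    IsLatticeWord v := fun t u hu => by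
  obtain ⟨w₀, hw₀, heq⟩ := h t
  rw [heq]
  exact hw₀ t u hu

end LatticeWord

section SwapBetween

variable {n : ℕ} {w : Fin n → ℕ} {k j l : Fin n}

lemma IsLatticeWord.comp_swap_of_eq_left (hw : IsLatticeWord w)
    (hw' : IsLatticeWord (w ∘ swap k l)) (hkj : k < j) (hjl : j < l) (hj : w j = w k) :
    IsLatticeWord (w ∘ swap j l) := by
  rw [Fin.lt_def] at hkj hjl
  refine .of_prefixCount fun t => ?_
  by_cases ht : (j : ℕ) < t ∧ t ≤ l
  · refine ⟨_, hw', funext fun u => ?_⟩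
    have h₁ := prefixCount_comp_swap (w := w) ht.1 ht.2 u
    have h₂ := prefixCount_comp_swap (w := w) (k := k) (by omega) ht.2 u
    rw [hj] at h₁
    omega
  · exact ⟨w, hw, prefixCount_comp_swap_of_iff (by omega)⟩

lemma IsLatticeWord.comp_swap_of_eq_right (hw : IsLatticeWord w)
    (hw' : IsLatticeWord (w ∘ swap k l)) (hkj : k < j) (hjl : j < l) (hj : w j = w l) :
    IsLatticeWord (w ∘ swap k j) := by
  rw [Fin.lt_def] at hkj hjl
  refine .of_prefixCount fun t => ?_
  by_cases ht : (k : ℕ) < t ∧ t ≤ j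
  · refine ⟨_, hw', funext fun u => ?_⟩
    have h₁ := prefixCount_comp_swap (w := w) ht.1 ht.2 u
    have h₂ := prefixCount_comp_swap (w := w) (l := l) ht.1 (by omega) u
    rw [hj] at h₁
    omega
  · exact ⟨w, hw, prefixCount_comp_swap_of_iff (by omega)⟩

lemma IsLatticeWord.comp_swap_comp_swap (hU : IsLatticeWord (w ∘ swap k j))
    (hw' : IsLatticeWord (w ∘ swap k l)) (hkj : k < j) (hjl : j < l) :
    IsLatticeWord (w ∘ swap k j ∘ swap j l) := by
  rw [Fin.lt_def] at hkj hjl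
  refine .of_prefixCount fun t => ?_
  by_cases ht : (j : ℕ) < t ∧ t ≤ l
  · refine ⟨_, hw', funext fun u => ?_⟩
    have h₁ := prefixCount_comp_swap (w := w ∘ swap k j) ht.1 ht.2 u
    have h₂ := prefixCount_comp_swap (w := w) (k := k) (by omega) ht.2 u
    rw [Function.comp_assoc, prefixCount_comp_swap_of_iff (w := w) (t := t) (by omega)] at h₁
    simp only [Function.comp_apply, swap_apply_right,
      swap_apply_of_ne_of_ne (Fin.ne_of_gt (Fin.lt_def.2 (hkj.trans hjl)))
        (Fin.ne_of_gt (Fin.lt_def.2 hjl))] at h₁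
    omega
  · exact ⟨_, hU, prefixCount_comp_swap_of_iff (w := w ∘ swap k j) (by omega)⟩

lemma IsLatticeWord.comp_swap_of_minimal (hw : IsLatticeWord w)
    (hw' : IsLatticeWord (w ∘ swap k l)) (hkj : k < j) (hjl : j < l)
    (hlt : w k < w j) (hlt' : w j < w l)
    (hgap : ∀ m, k < m → m < l → ¬ (w k ≤ w m ∧ w m < w j)) :
    IsLatticeWord (w ∘ swap k j) := by
  rw [Fin.lt_def] at hkj hjl
  intro t u hu
  by_cases ht : (k : ℕ) < t ∧ t ≤ j
  swap
  · rw [prefixCount_comp_swap_of_iff (by omega)]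
    exact hw t u hu
  have hU := prefixCount_comp_swap (w := w) ht.1 ht.2
  have hstab : ∀ v, w k ≤ v → v < w j → prefixCount w (j + 1) v = prefixCount w t v :=
    fun v h₁ h₂ => prefixCount_eq_of_forall_ne (by omega) fun m hm₁ hm₂ hm =>
      hgap m (Fin.lt_def.2 (by omega)) (Fin.lt_def.2 (by omega)) (hm ▸ ⟨h₁, h₂⟩)
  have hj := prefixCount_add_one_le (w := w) (j := j) rfl ht.2
  have h₁ := hU u
  have h₂ := hU (u + 1)
  -- The prefix trades one `w k` for one `w j`, so only `u + 1 = w j` and `u = w k` can fail.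
  -- By `hgap` the letters involved do not occur between `k` and `j`, so the first case is
  -- read off the prefix ending at `j` (of `w ∘ swap k l` if `w j = w k + 1`, of `w` otherwise)
  -- and the second one off the prefix ending before `k`.
  by_cases hd : u + 1 = w j
  · rw [← hd] at hj
    have hW := hw (j + 1) u hu
    have hW' := hw' (j + 1) u hu
    have hY := prefixCount_comp_swap (w := w) (k := k) (l := l) (t := j + 1) (by omega) (by omega)
    have hY₁ := hY u
    have hY₂ := hY (u + 1)
    have hs := hstab u (by omega) (by omega)
    split_ifs at h₁ h₂ hY₁ hY₂ <;> omega
  by_cases ha : u = w k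
  · have hstab' : prefixCount w t (u + 1) = prefixCount w k (u + 1) :=
      prefixCount_eq_of_forall_ne ht.1.le fun m hm₁ hm₂ hm => by
        rcases hm₁.lt_or_eq with hm₁ | hm₁
        · exact hgap m (Fin.lt_def.2 hm₁) (Fin.lt_def.2 (by omega)) (by omega)
        · rw [Fin.ext hm₁.symm] at hm
          omega
    have hW := hw k u hu
    have hk := prefixCount_add_one_le (w := w) (j := k) ha.symm le_rfl
    have hmono := prefixCount_mono w u (show (k : ℕ) + 1 ≤ t by omega)
    split_ifs at h₁ h₂ <;> omega
  have hW := hw t u hu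
  split_ifs at h₁ h₂ <;> omega

end SwapBetween

lemma swap_apply_mem {ι : Type*} [DecidableEq ι] {s : Set ι} {p q c : ι} (hp : p ∈ s)
    (hq : q ∈ s) (hc : c ∈ s) : swap p q c ∈ s := by
  rw [swap_apply_def]
  split_ifs <;> assumption

section Fillings

variable {α β γ : Partn} {n : ℕ} {e : Fin n → ℕ × ℕ}

def readingWord (e : Fin n → ℕ × ℕ) (F : SkFilling α β γ) : Fin n → ℕ := fun k => F.entry (e k)

lemma IsRowRead.one_le_readingWord (he : IsRowRead β γ e) (F : SkFilling α β γ) (k : Fin n) :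
    1 ≤ readingWord e F k :=
  F.pos_inside _ (he.1 k)

lemma IsRowRead.ext_of_readingWord (he : IsRowRead β γ e) {F G : SkFilling α β γ}
    (h : readingWord e F = readingWord e G) : F = G := by
  have hentry : F.entry = G.entry := funext fun c => by
    by_cases hc : c ∈ SkewCells β γ
    · obtain ⟨k, rfl⟩ := he.2.2.1 c hc
      exact congrFun h k
    · rw [F.zero_outside c hc, G.zero_outside c hc]
  cases F
  cases G
  cases hentry
  rfl

def SkFilling.swapCells (F : SkFilling α β γ) {p q : ℕ × ℕ} (hp : p ∈ SkewCells β γ)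
    (hq : q ∈ SkewCells β γ) : SkFilling α β γ where
  entry := F.entry ∘ swap p q
  zero_outside c hc := by
    rw [Function.comp_apply, swap_apply_of_ne_of_ne (by rintro rfl; exact hc hp)
      (by rintro rfl; exact hc hq)]
    exact F.zero_outside c hc
  pos_inside c hc := F.pos_inside _ (swap_apply_mem hp hq hc)
  content u hu := by
    rw [← F.content u hu, ← Set.ncard_image_of_injective _ (swap p q).injective,
      Equiv.image_eq_preimage_symm, symm_swap]
    congr 1
    ext c
    simp only [Set.mem_preimage, Set.mem_ofPred_eq, Function.comp_apply, swap_apply_self]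
    exact and_congr_left' ⟨fun h => by simpa using swap_apply_mem hp hq h, swap_apply_mem hp hq⟩

lemma readingWord_swapCells (he : IsRowRead β γ e) (F : SkFilling α β γ) (k l : Fin n) :
    readingWord e (F.swapCells (he.1 k) (he.1 l)) = readingWord e F ∘ swap k l :=
  funext fun j => congrArg F.entry (he.2.1.swap_apply k l j)

lemma RookStrip.not_sortSwap (hrook : RookStrip β γ) (W Z : ℕ × ℕ → ℕ) : ¬ SortSwap β γ W Z := by
  rintro ⟨p, q, hp, hq, ⟨h₁, h₂⟩ | ⟨h₁, h₂⟩, -⟩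
  · exact h₂.ne (congrArg Prod.snd (hrook.eq_of_fst_eq hp hq h₁))
  · exact h₂.ne (congrArg Prod.fst (hrook.eq_of_snd_eq hp hq h₁))

lemma IsRowRead.readingWord_eq_comp_swap_iff (he : IsRowRead β γ e) {F G : SkFilling α β γ}
    (k l : Fin n) :
    readingWord e G = readingWord e F ∘ swap k l ↔ G.entry = F.entry ∘ swap (e k) (e l) := by
  constructor
  · intro h
    rw [he.ext_of_readingWord (h.trans (readingWord_swapCells he F k l).symm)]
    rfl
  · intro h
    rw [← readingWord_swapCells he F k l]
    exact funext fun j => congrFun h (e j)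

lemma RookStrip.boxMove_iff (hrook : RookStrip β γ) (he : IsRowRead β γ e)
    {F G : SkFilling α β γ} :
    BoxMove F G ↔ ∃ k l : Fin n, k < l ∧ readingWord e F k < readingWord e F l ∧
      readingWord e G = readingWord e F ∘ swap k l := by
  simp only [he.readingWord_eq_comp_swap_iff]
  constructor
  · rintro ⟨p, q, hp, hq, hpq, hlt, hsort⟩
    obtain ⟨k, rfl⟩ := he.2.2.1 p hp
    obtain ⟨l, rfl⟩ := he.2.2.1 q hq
    refine ⟨k, l, he.lt_iff.2 hpq, hlt, ?_⟩
    rw [swap_comm, comp_swap_eq_update]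
    exact (Relation.reflTransGen_iff_eq (hrook.not_sortSwap _)).1 hsort
  · rintro ⟨k, l, hkl, hlt, hG⟩
    refine ⟨e k, e l, he.1 k, he.1 l, he.lt_iff.1 hkl, hlt, ?_⟩
    rw [hG, swap_comm, comp_swap_eq_update]

end Fillings

section LatticeTranslation

variable {n : ℕ} {g : Fin n → ℕ}

lemma StrictAnti.exists_le_iff_lt (hg : StrictAnti g) (c : ℕ) :
    ∃ t : ℕ, ∀ k, c ≤ g k ↔ (k : ℕ) < t := by
  refine ⟨({k | c ≤ g k} : Finset (Fin n)).sup (fun k => k + 1), fun k => ⟨fun hk => ?_, ?_⟩⟩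
  · exact Nat.lt_of_succ_le (le_sup (f := fun k : Fin n => (k : ℕ) + 1) (by simpa using hk))
  · refine not_imp_not.1 fun hk => not_lt.2 (Finset.sup_le fun j hj => ?_)
    have hj : c ≤ g j := by simpa using hj
    exact Nat.succ_le_of_lt (lt_of_not_ge fun hkj => hk (hj.trans (hg.antitone hkj)))

lemma StrictAnti.exists_lt_iff_le (hg : StrictAnti g) (t : ℕ) :
    ∃ c : ℕ, ∀ k : Fin n, (k : ℕ) < t ↔ c ≤ g k := by
  refine ⟨({k | ¬ (k : ℕ) < t} : Finset (Fin n)).sup (fun k => g k + 1),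
    fun k => ⟨fun hk => Finset.sup_le fun j hj => ?_, fun hk => ?_⟩⟩
  · have hj : t ≤ j := by simpa using hj
    exact hg (Fin.lt_def.2 (by omega))
  · by_contra hkt
    have := le_sup (s := ({k | ¬ (k : ℕ) < t} : Finset (Fin n)))
      (f := fun k : Fin n => g k + 1) (b := k) (by simpa using hkt)
    omega

end LatticeTranslation

section LRFillings

variable {α β γ : Partn} {n : ℕ} {e : Fin n → ℕ × ℕ}

lemma readingWord_prefixCount_eq (F : SkFilling α β γ) {c t : ℕ}
    (h : ∀ k, c ≤ (e k).2 ↔ (k : ℕ) < t) (u : ℕ) :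
    #{k | c ≤ (e k).2 ∧ F.entry (e k) = u} = prefixCount (readingWord e F) t u :=
  congrArg card (filter_congr fun k _ => by rw [h k]; rfl)

theorem RookStrip.isLRF_iff (hrook : RookStrip β γ) (he : IsRowRead β γ e)
    (F : SkFilling α β γ) : IsLRF F ↔ IsLatticeWord (readingWord e F) := by
  have hcount (c u : ℕ) : Set.ncard {p ∈ SkewCells β γ | c ≤ p.2 ∧ F.entry p = u} =
      #{k | c ≤ (e k).2 ∧ F.entry (e k) = u} := he.ncard_cells_filter _
  have hanti := he.snd_strictAnti hrook
  simp only [IsLRF, hcount]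
  constructor
  · rintro ⟨-, -, hlat⟩ t u hu
    obtain ⟨c, hc⟩ := hanti.exists_lt_iff_le t
    have := hlat (u + 1) c (by omega)
    rwa [readingWord_prefixCount_eq F fun k => (hc k).symm,
      readingWord_prefixCount_eq F fun k => (hc k).symm, Nat.add_sub_cancel] at this
  · intro hlat
    refine ⟨fun i j j' hc hc' _ => (hrook.eq_of_fst_eq hc hc' rfl ▸ le_rfl),
      fun i i' j hc hc' hii' => absurd (congrArg Prod.fst (hrook.eq_of_snd_eq hc hc' rfl))
        hii'.ne, fun u c hu => ?_⟩
    obtain ⟨t, ht⟩ := hanti.exists_le_iff_lt c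
    rw [readingWord_prefixCount_eq F ht, readingWord_prefixCount_eq F ht]
    have := hlat t (u - 1) (by omega)
    rwa [Nat.sub_add_cancel (by omega)] at this

end LRFillings

section Cover

variable {α β γ : Partn} {n : ℕ} {e : Fin n → ℕ × ℕ} {Y W : SkFilling α β γ}

lemma RookStrip.leBox_of_readingWord_eq (hrook : RookStrip β γ) (he : IsRowRead β γ e)
    {F G : SkFilling α β γ} (hF : IsLatticeWord (readingWord e F))
    (hG : IsLatticeWord (readingWord e G)) {k l : Fin n} (hkl : k < l)
    (hlt : readingWord e F k < readingWord e F l)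
    (h : readingWord e G = readingWord e F ∘ swap k l) : LeBox G F :=
  .single ⟨(hrook.isLRF_iff he G).2 hG, (hrook.isLRF_iff he F).2 hF,
    (hrook.boxMove_iff he).2 ⟨k, l, hkl, hlt, h⟩⟩

lemma RookStrip.not_boxMove_self (hrook : RookStrip β γ) (he : IsRowRead β γ e)
    (F : SkFilling α β γ) : ¬ BoxMove F F := by
  rw [hrook.boxMove_iff he]
  rintro ⟨k, l, -, hlt, h⟩
  have := congrFun h k
  simp only [Function.comp_apply, swap_apply_left] at this
  exact hlt.ne' this.symm

lemma CovBox.boxMove (hrook : RookStrip β γ) (he : IsRowRead β γ e) (h : CovBox Y W) :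
    BoxMove W Y := by
  obtain ⟨-, -, hle, hne, hmax⟩ := h
  obtain heq | ⟨V, hYV, hV, hW, hmove⟩ := Relation.ReflTransGen.cases_tail hle
  · exact absurd heq.symm hne
  obtain rfl | rfl := hmax V hV hYV (.single ⟨hV, hW, hmove⟩)
  · exact hmove
  · exact absurd hmove (hrook.not_boxMove_self he V)

lemma CovBox.false_of_between (hrook : RookStrip β γ) (he : IsRowRead β γ e) (h : CovBox Y W)
    {V : SkFilling α β γ} (hV : IsLatticeWord (readingWord e V)) (hYV : LeBox Y V)
    (hVW : LeBox V W) (hVY : readingWord e V ≠ readingWord e Y)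
    (hVW' : readingWord e V ≠ readingWord e W) : False := by
  obtain rfl | rfl := h.2.2.2.2 V ((hrook.isLRF_iff he V).2 hV) hYV hVW
  · exact hVY rfl
  · exact hVW' rfl

variable {k l : Fin n}

lemma CovBox.readingWord_ne_left (hrook : RookStrip β γ) (he : IsRowRead β γ e)
    (h : CovBox Y W) (hY : readingWord e Y = readingWord e W ∘ swap k l)
    (hlt : readingWord e W k < readingWord e W l) {j : Fin n} (hkj : k < j) (hjl : j < l) :
    readingWord e W j ≠ readingWord e W k := by
  intro hj
  have hw : IsLatticeWord (readingWord e W) := (hrook.isLRF_iff he W).1 h.2.1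
  have hY' : IsLatticeWord (readingWord e Y) := (hrook.isLRF_iff he Y).1 h.1
  have hV := readingWord_swapCells he W j l
  have hVlat : IsLatticeWord (readingWord e (W.swapCells (he.1 j) (he.1 l))) :=
    hV ▸ hw.comp_swap_of_eq_left (hY ▸ hY') hkj hjl hj
  refine h.false_of_between hrook he hVlat (hrook.leBox_of_readingWord_eq he hVlat hY' hkj ?_ ?_)
    (hrook.leBox_of_readingWord_eq he hw hVlat hjl (hj.trans_lt hlt) hV) ?_ ?_ <;>
    simp only [hV, hY, ne_eq, funext_iff, not_forall, Function.comp_apply, swap_apply_def]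
  · grind
  · grind
  · exact ⟨k, by grind⟩
  · exact ⟨j, by grind⟩

lemma CovBox.readingWord_ne_right (hrook : RookStrip β γ) (he : IsRowRead β γ e)
    (h : CovBox Y W) (hY : readingWord e Y = readingWord e W ∘ swap k l)
    (hlt : readingWord e W k < readingWord e W l) {j : Fin n} (hkj : k < j) (hjl : j < l) :
    readingWord e W j ≠ readingWord e W l := by
  intro hj
  have hw : IsLatticeWord (readingWord e W) := (hrook.isLRF_iff he W).1 h.2.1
  have hY' : IsLatticeWord (readingWord e Y) := (hrook.isLRF_iff he Y).1 h.1
  have hV := readingWord_swapCells he W k j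
  have hVlat : IsLatticeWord (readingWord e (W.swapCells (he.1 k) (he.1 j))) :=
    hV ▸ hw.comp_swap_of_eq_right (hY ▸ hY') hkj hjl hj
  refine h.false_of_between hrook he hVlat (hrook.leBox_of_readingWord_eq he hVlat hY' hjl ?_ ?_)
    (hrook.leBox_of_readingWord_eq he hw hVlat hkj (hj ▸ hlt) hV) ?_ ?_ <;>
    simp only [hV, hY, ne_eq, funext_iff, not_forall, Function.comp_apply, swap_apply_def]
  · grind
  · grind
  · exact ⟨l, by grind⟩
  · exact ⟨k, by grind⟩

lemma CovBox.not_readingWord_mem_Ioo (hrook : RookStrip β γ) (he : IsRowRead β γ e)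
    (h : CovBox Y W) (hY : readingWord e Y = readingWord e W ∘ swap k l)
    (hlt : readingWord e W k < readingWord e W l) {j₀ : Fin n} (hkj₀ : k < j₀) (hj₀l : j₀ < l) :
    ¬ (readingWord e W k < readingWord e W j₀ ∧ readingWord e W j₀ < readingWord e W l) := by
  intro hj₀
  obtain ⟨j, hj, hmin⟩ := exists_min_image ({m | k < m ∧ m < l ∧ readingWord e W k <
    readingWord e W m ∧ readingWord e W m < readingWord e W l} : Finset (Fin n))
    (readingWord e W) ⟨j₀, by simp [*]⟩
  simp only [mem_filter, mem_univ, true_and, and_imp] at hj hmin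
  obtain ⟨hkj, hjl, hlt₁, hlt₂⟩ := hj
  have hgap (m : Fin n) (hkm : k < m) (hml : m < l) :
      ¬ (readingWord e W k ≤ readingWord e W m ∧ readingWord e W m < readingWord e W j) := by
    rintro ⟨hm₁, hm₂⟩
    rcases hm₁.lt_or_eq with hm₁ | hm₁
    · exact (hmin m hkm hml hm₁ (hm₂.trans hlt₂)).not_gt hm₂
    · exact h.readingWord_ne_left hrook he hY hlt hkm hml hm₁.symm
  have hw : IsLatticeWord (readingWord e W) := (hrook.isLRF_iff he W).1 h.2.1
  have hY' : IsLatticeWord (readingWord e Y) := (hrook.isLRF_iff he Y).1 h.1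
  -- `W > U > U' > Y` in the box order, with `U'` obtained from `U` by exchanging `j` and `l`
  set U := W.swapCells (he.1 k) (he.1 j)
  have hU : readingWord e U = readingWord e W ∘ swap k j := readingWord_swapCells he W k j
  have hU' : readingWord e (U.swapCells (he.1 j) (he.1 l)) =
      readingWord e W ∘ swap k j ∘ swap j l := by
    rw [readingWord_swapCells he, hU]
    rfl
  have hUlat : IsLatticeWord (readingWord e U) :=
    hU ▸ hw.comp_swap_of_minimal (hY ▸ hY') hkj hjl hlt₁ hlt₂ hgap
  have hU'lat : IsLatticeWord (readingWord e (U.swapCells (he.1 j) (he.1 l))) :=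
    hU' ▸ (hU ▸ hUlat).comp_swap_comp_swap (hY ▸ hY') hkj hjl
  have hYU : LeBox Y U := .trans
    (hrook.leBox_of_readingWord_eq he hU'lat hY' hkj (by
      simp only [hU', Function.comp_apply, swap_apply_def]; grind) (by
      rw [hY, hU']; funext i; simp only [Function.comp_apply, swap_apply_def]; grind))
    (hrook.leBox_of_readingWord_eq he hUlat hU'lat hjl (by
      simp only [hU, Function.comp_apply, swap_apply_def]; grind) (by rw [hU', hU]; rfl))
  refine h.false_of_between hrook he hUlat hYU
    (hrook.leBox_of_readingWord_eq he hw hUlat hkj hlt₁ hU) ?_ ?_ <;>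
    simp only [hU, hY, ne_eq, funext_iff, not_forall, Function.comp_apply, swap_apply_def] <;>
    exact ⟨k, by grind⟩

theorem CovBox.invCount_readingWord (hrook : RookStrip β γ) (he : IsRowRead β γ e)
    (h : CovBox Y W) : invCount (readingWord e Y) = invCount (readingWord e W) + 1 := by
  obtain ⟨k, l, hkl, hlt, hY⟩ := (hrook.boxMove_iff he).1 (h.boxMove hrook he)
  rw [hY]
  refine invCount_comp_swap hkl hlt fun j hkj hjl => ?_
  have hne₁ := h.readingWord_ne_left hrook he hY hlt hkj hjl
  have hne₂ := h.readingWord_ne_right hrook he hY hlt hkj hjl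
  have hmid := h.not_readingWord_mem_Ioo hrook he hY hlt hkj hjl
  omega

end Cover

section Standardization

variable {α β γ : Partn} {n : ℕ} {e : Fin n → ℕ × ℕ}

lemma blockIdx_mono (α : Partn) {v v' : ℕ} (h : v ≤ v') (hv' : blockIdx α v' ≠ 0) :
    blockIdx α v ≤ blockIdx α v' := by
  have hne : {u | v' < psum α u}.Nonempty := by
    by_contra hempty
    exact hv' (by rw [blockIdx, Set.not_nonempty_iff_eq_empty.1 hempty, Nat.sInf_empty])
  exact csInf_le_csInf (OrderBot.bddBelow _) hne fun u hu => h.trans_lt hu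

lemma IsStdOf.lt_iff (he : IsRowRead β γ e) {F : SkFilling α β γ} {p : Perm (Fin n)}
    (hp : IsStdOf α F e p) {i j : Fin n} (hij : i < j) :
    p j < p i ↔ readingWord e F j < readingWord e F i := by
  have hblock (k : Fin n) : blockIdx α (p k) = readingWord e F k := hp.1 k
  have hpos (k : Fin n) : blockIdx α (p k) ≠ 0 := by
    rw [hblock]
    exact Nat.one_le_iff_ne_zero.1 (he.one_le_readingWord F k)
  constructor
  · intro hji
    have := blockIdx_mono α (Fin.le_def.1 hji.le) (hpos i)
    rw [hblock, hblock] at this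
    exact this.lt_of_ne fun heq => (hp.2 i j hij heq.symm).not_gt hji
  · intro hlt
    by_contra hij'
    have := blockIdx_mono α (Fin.le_def.1 (not_lt.1 hij')) (hpos j)
    rw [hblock, hblock] at this
    exact this.not_gt hlt

lemma IsStdOf.invCount_eq (he : IsRowRead β γ e) {F : SkFilling α β γ} {p : Perm (Fin n)}
    (hp : IsStdOf α F e p) : invCount ⇑p = invCount (readingWord e F) :=
  congrArg card <| filter_congr fun _ _ => and_congr_right (hp.lt_iff he)

end Standardization

lemma Nat.eq_add_of_forall_lt_eq_succ {f : ℕ → ℕ} {m : ℕ} (h : ∀ i < m, f i = f (i + 1) + 1) :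
    f 0 = f m + m := by
  induction m with
  | zero => rfl
  | succ m ih =>
    have := h m (Nat.lt_succ_self m)
    have := ih fun i hi => h i (hi.trans (Nat.lt_succ_self m))
    omega

theorem stmt16_general (n : ℕ) (α β γ : Partn) (hrook : RookStrip β γ)
    (e : Fin n → ℕ × ℕ) (he : IsRowRead β γ e)
    (X Z : SkFilling α β γ)
    (px pz : Perm (Fin n)) (hpx : IsStdOf α X e px) (hpz : IsStdOf α Z e pz)
    (m : ℕ) (c : ℕ → SkFilling α β γ) (h0 : c 0 = Z) (hm : c m = X)
    (hcov : ∀ i, i < m → CovBox (c i) (c (i + 1))) :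
    m = permLength pz - permLength px := by
  have htel := Nat.eq_add_of_forall_lt_eq_succ (f := fun i => invCount (readingWord e (c i)))
    fun i hi => (hcov i hi).invCount_readingWord hrook he
  rw [permLength_eq_invCount, permLength_eq_invCount, hpz.invCount_eq he, hpx.invCount_eq he,
    ← h0, ← hm]
  omega

/-- for a rook strip, every saturated chain from `Z` up to `X` in
the box order has length `ℓ(π(Z)) − ℓ(π(X))`. -/
theorem stmt16 (n : ℕ) (α β γ : Partn) (hsub : PartnSub γ β) (hrook : RookStrip β γ)
    (hn : PartnOf α n) (e : Fin n → ℕ × ℕ) (he : IsRowRead β γ e)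
    (X Z : SkFilling α β γ) (hX : IsLRF X) (hZ : IsLRF Z)
    (px pz : Perm (Fin n)) (hpx : IsStdOf α X e px) (hpz : IsStdOf α Z e pz)
    (m : ℕ) (c : ℕ → SkFilling α β γ) (h0 : c 0 = Z) (hm : c m = X)
    (hcov : ∀ i, i < m → CovBox (c i) (c (i + 1))) :
    m = permLength pz - permLength px :=
  stmt16_general n α β γ hrook e he X Z px pz hpx hpz m c h0 hm hcov
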